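/- arXiv:2410.09321 — 3 statements merged into one kernel-verified Lean document; each statement's English description precedes it below -/
import Mathlib

section
/- Let G=(V,E) be a correlation clustering instance, β∈(0,1), 𝒞 any clustering, k∈[n], and U⊆V with |U|=k. Then f^-_2 ≤ (2/(1−β))·cost^k_𝒞, where f^-_2 = Σ_{u∈U} Σ_{uv∈φ^-_2(u)} (1−x_{uv}). -/
open Finset

attribute [local instance] Classical.propDecidable

noncomputable section

variable {V : Type*}

/-- The neighborhood of `u` in the graph of `+`edges `E` (contains `u` itself,
since `E` contains all self-loops). -/
def Nbr [Fintype V] (E : V → V → Prop) (u : V) : Finset V :=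
  Finset.univ.filter (fun v => E u v)

/-- The degree `d(u) = |N(u)|`. -/
def deg [Fintype V] (E : V → V → Prop) (u : V) : ℕ := (Nbr E u).card

/-- `M_{uv} = max (d(u), d(v))`. -/
def Mdeg [Fintype V] (E : V → V → Prop) (u v : V) : ℕ := max (deg E u) (deg E v)

/-- The pruned edge set `E_H = {uv ∈ E : |N(u) Δ N(v)| ≤ β · M_{uv}}`. -/
def EH [Fintype V] (β : ℝ) (E : V → V → Prop) (u v : V) : Prop :=
  E u v ∧ ((symmDiff (Nbr E u) (Nbr E v)).card : ℝ) ≤ β * (Mdeg E u v : ℝ)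

/-- The neighborhood of `u` in the pruned graph `H`. -/
def NH [Fintype V] (β : ℝ) (E : V → V → Prop) (u : V) : Finset V :=
  Finset.univ.filter (fun v => EH β E u v)

/-- The fractional solution: `x_{uu} = 0` and
`x_{uv} = 1 − |N_H(u) ∩ N_H(v)| / M_{uv}` for `u ≠ v`. -/
def xval [Fintype V] (β : ℝ) (E : V → V → Prop) (u v : V) : ℝ :=
  if u = v then 0 else 1 - ((NH β E u ∩ NH β E v).card : ℝ) / (Mdeg E u v : ℝ)

/-- `cost_𝒞(u)`: the number of pairs incident to `u` in disagreement with respect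
to the clustering `C` (given as a labelling function). -/
def costC [Fintype V] {α : Type*} (E : V → V → Prop) (C : V → α) (u : V) : ℕ :=
  (Finset.univ.filter
    (fun v => (E u v ∧ C u ≠ C v) ∨ (¬ E u v ∧ v ≠ u ∧ C u = C v))).card

/-- The top-`k` norm `cost^k_𝒞` of the disagreement vector of the clustering `C`:
the maximum of `∑_{u ∈ T} cost_𝒞(u)` over subsets `T ⊆ V` of size `k`. -/
def costTopK [Fintype V] {α : Type*} (E : V → V → Prop) (C : V → α) (k : ℕ) : ℕ :=
  (Finset.powersetCard k (Finset.univ : Finset V)).sup (fun T => ∑ u ∈ T, costC E C u)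

/-- `φ^+_1(u)`: (other endpoints of) `+`edges incident to `u` that are cut in `𝒞`. -/
def phi1p [Fintype V] {α : Type*} (E : V → V → Prop) (C : V → α) (u : V) : Finset V :=
  Finset.univ.filter (fun v => E u v ∧ C u ≠ C v)

/-- `φ^+_2(u)`: (other endpoints of) `+`edges of `E ∖ E_H` incident to `u` that are
not cut in `𝒞`. -/
def phi2p [Fintype V] {α : Type*} (β : ℝ) (E : V → V → Prop) (C : V → α) (u : V) :
    Finset V :=
  Finset.univ.filter (fun v => E u v ∧ ¬ EH β E u v ∧ C u = C v)

/-- `φ^+_3(u)`: (other endpoints of) edges of `E_H` incident to `u` that are not cut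
in `𝒞` (this includes the self-loop `uu`). -/
def phi3p [Fintype V] {α : Type*} (β : ℝ) (E : V → V → Prop) (C : V → α) (u : V) :
    Finset V :=
  Finset.univ.filter (fun v => EH β E u v ∧ C u = C v)

/-- `φ^-_1(u)`: (other endpoints of) `−`edges incident to `u` that are not cut in `𝒞`. -/
def phi1m [Fintype V] {α : Type*} (E : V → V → Prop) (C : V → α) (u : V) : Finset V :=
  Finset.univ.filter (fun v => v ≠ u ∧ ¬ E u v ∧ C u = C v)

/-- `φ^-_2(u)`: (other endpoints of) `−`edges incident to `u` that are cut in `𝒞`. -/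
def phi2m [Fintype V] {α : Type*} (E : V → V → Prop) (C : V → α) (u : V) : Finset V :=
  Finset.univ.filter (fun v => v ≠ u ∧ ¬ E u v ∧ C u ≠ C v)

/- ## Auxiliary lemmas -/

lemma mem_Nbr [Fintype V] {E : V → V → Prop} {u v : V} : v ∈ Nbr E u ↔ E u v := by
  simp [Nbr]

lemma mem_NH [Fintype V] {β : ℝ} {E : V → V → Prop} {u v : V} :
    v ∈ NH β E u ↔ EH β E u v := by simp [NH]

lemma deg_pos [Fintype V] {E : V → V → Prop} (hrefl : ∀ u, E u u) (u : V) :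
    0 < deg E u := Finset.card_pos.2 ⟨u, mem_Nbr.2 (hrefl u)⟩

lemma deg_le_of_mem_NH [Fintype V] {β : ℝ} {E : V → V → Prop} (hβ0 : 0 < β)
    {u w : V} (h : w ∈ NH β E u) : (1 - β) * (deg E w : ℝ) ≤ (deg E u : ℝ) := by
  obtain ⟨-, h2⟩ := mem_NH.1 h
  have hsub : Nbr E w ⊆ Nbr E u ∪ symmDiff (Nbr E u) (Nbr E w) := by
    intro x hx
    by_cases hxu : x ∈ Nbr E u
    · exact Finset.mem_union_left _ hxu
    · exact Finset.mem_union_right _ (by simp [symmDiff_def, hx, hxu])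
  have hcard : (deg E w : ℝ) ≤ (deg E u : ℝ) + ((symmDiff (Nbr E u) (Nbr E w)).card : ℝ) := by
    have := (Finset.card_le_card hsub).trans (Finset.card_union_le _ _)
    exact_mod_cast this
  rcases le_total (deg E u) (deg E w) with hle | hle
  · have hM : (Mdeg E u w : ℝ) = (deg E w : ℝ) := by
      simp [Mdeg, max_eq_right hle]
    rw [hM] at h2
    nlinarith
  · have : (deg E w : ℝ) ≤ (deg E u : ℝ) := by exact_mod_cast hle
    nlinarith

lemma exists_topk {γ : Type*} (f : γ → ℕ) :
    ∀ (k : ℕ) (S : Finset γ), k ≤ S.card →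
      ∃ T ⊆ S, T.card = k ∧ ∀ x ∈ S, x ∉ T → ∀ y ∈ T, f x ≤ f y := by
  intro k
  induction k with
  | zero => intro S _; exact ⟨∅, Finset.empty_subset _, rfl, by simp⟩
  | succ k ih =>
    intro S hk
    obtain ⟨T, hTS, hTcard, hT⟩ := ih S (Nat.le_of_succ_le hk)
    have hne : (S \ T).Nonempty := by
      rw [← Finset.card_pos, Finset.card_sdiff_of_subset hTS, hTcard]
      omega
    obtain ⟨m, hm, hmax⟩ := Finset.exists_max_image (S \ T) f hne
    have hmS : m ∈ S := (Finset.mem_sdiff.1 hm).1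
    have hmT : m ∉ T := (Finset.mem_sdiff.1 hm).2
    refine ⟨insert m T, ?_, ?_, ?_⟩
    · exact Finset.insert_subset hmS hTS
    · rw [Finset.card_insert_of_notMem hmT, hTcard]
    · intro x hxS hx y hy
      have hxT : x ∉ T := fun h => hx (Finset.mem_insert_of_mem h)
      rcases Finset.mem_insert.1 hy with rfl | hyT
      · exact hmax x (Finset.mem_sdiff.2 ⟨hxS, hxT⟩)
      · exact hT x hxS hxT y hyT

lemma sum_costC_le_topK [Fintype V] {α : Type*} (E : V → V → Prop) (C : V → α)
    {k : ℕ} {T : Finset V} (hT : T.card = k) :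
    ∑ u ∈ T, costC E C u ≤ costTopK E C k := by
  rw [costTopK]
  apply Finset.le_sup (f := fun T => ∑ u ∈ T, costC E C u)
  rw [Finset.mem_powersetCard]
  exact ⟨Finset.subset_univ _, hT⟩

lemma frac_topk [Fintype V] {α : Type*} (E : V → V → Prop) (C : V → α)
    (k : ℕ) (hk1 : 1 ≤ k) (hk2 : k ≤ Fintype.card V)
    (z : V → ℝ) (hz0 : ∀ w, 0 ≤ z w) (hz1 : ∀ w, z w ≤ 1)
    (hzk : ∑ w, z w ≤ (k : ℝ)) :
    ∑ w, z w * (costC E C w : ℝ) ≤ (costTopK E C k : ℝ) := by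
  obtain ⟨T, -, hTcard, hT⟩ := exists_topk (costC E C) k Finset.univ
    (by simpa using hk2)
  have hTne : T.Nonempty := Finset.card_pos.1 (by omega)
  obtain ⟨t0, ht0, hmin⟩ := Finset.exists_min_image T (costC E C) hTne
  set m : ℝ := (costC E C t0 : ℝ) with hm
  have hm0 : 0 ≤ m := Nat.cast_nonneg _
  have hout : ∀ w ∉ T, (costC E C w : ℝ) ≤ m := by
    intro w hw
    rw [hm]; exact_mod_cast hT w (Finset.mem_univ w) hw t0 ht0
  have hin : ∀ w ∈ T, m ≤ (costC E C w : ℝ) := by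
    intro w hw; rw [hm]; exact_mod_cast hmin w hw
  have hsplit : ∑ w, z w * (costC E C w : ℝ)
      = ∑ w ∈ T, z w * (costC E C w : ℝ) + ∑ w ∈ Tᶜ, z w * (costC E C w : ℝ) :=
    (Finset.sum_add_sum_compl T _).symm
  have h1 : ∑ w ∈ Tᶜ, z w * (costC E C w : ℝ) ≤ (∑ w ∈ Tᶜ, z w) * m := by
    rw [Finset.sum_mul]
    apply Finset.sum_le_sum
    intro w hw
    have := hout w (Finset.mem_compl.1 hw)
    nlinarith [hz0 w]
  have h2 : ∑ w ∈ Tᶜ, z w ≤ (k : ℝ) - ∑ w ∈ T, z w := by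
    have := Finset.sum_add_sum_compl T z
    linarith
  have h3 : ∑ w ∈ T, z w * (costC E C w : ℝ)
      ≤ (∑ w ∈ T, z w) * m + ∑ w ∈ T, ((costC E C w : ℝ) - m) := by
    rw [Finset.sum_mul, ← Finset.sum_add_distrib]
    apply Finset.sum_le_sum
    intro w hw
    have h4 := hin w hw
    have h5 := hz1 w
    have h6 := hz0 w
    nlinarith
  have h7 : ∑ w ∈ T, ((costC E C w : ℝ) - m) = ∑ w ∈ T, (costC E C w : ℝ) - k * m := by
    rw [Finset.sum_sub_distrib, Finset.sum_const, hTcard, nsmul_eq_mul]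
  have h8 : ∑ w ∈ T, (costC E C w : ℝ) ≤ (costTopK E C k : ℝ) := by
    exact_mod_cast sum_costC_le_topK E C hTcard
  have hTz0 : 0 ≤ ∑ w ∈ T, z w := Finset.sum_nonneg fun w _ => hz0 w
  nlinarith [Finset.sum_nonneg (fun w (_ : w ∈ Tᶜ) => hz0 w)]

lemma sumA [Fintype V] {α : Type*} (β : ℝ) (E : V → V → Prop)
    (hsymm : ∀ u v, E u v → E v u) (C : V → α) (u : V) :
    ∑ v ∈ phi2m E C u, ((NH β E u ∩ NH β E v).filter (fun w => ¬ C u = C w)).card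
      ≤ ∑ w ∈ (NH β E u).filter (fun w => ¬ C u = C w), deg E w := by
  have key : ∀ v : V, (NH β E u ∩ NH β E v).filter (fun w => ¬ C u = C w)
      = ((NH β E u).filter (fun w => ¬ C u = C w)).filter (fun w => w ∈ NH β E v) := by
    intro v; ext w
    simp only [Finset.mem_filter, Finset.mem_inter]
    tauto
  calc ∑ v ∈ phi2m E C u, ((NH β E u ∩ NH β E v).filter (fun w => ¬ C u = C w)).card
      = ∑ v ∈ phi2m E C u, ∑ w ∈ (NH β E u).filter (fun w => ¬ C u = C w),
          if w ∈ NH β E v then 1 else 0 := by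
        refine Finset.sum_congr rfl fun v _ => ?_
        rw [key v, Finset.card_filter]
    _ = ∑ w ∈ (NH β E u).filter (fun w => ¬ C u = C w), ∑ v ∈ phi2m E C u,
          if w ∈ NH β E v then 1 else 0 := Finset.sum_comm
    _ ≤ ∑ w ∈ (NH β E u).filter (fun w => ¬ C u = C w), deg E w := by
        refine Finset.sum_le_sum fun w _ => ?_
        rw [← Finset.card_filter]
        refine Finset.card_le_card fun v hv => ?_
        obtain ⟨-, hw⟩ := Finset.mem_filter.1 hv
        exact mem_Nbr.2 (hsymm _ _ (mem_NH.1 hw).1)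

lemma sumB [Fintype V] {α : Type*} (β : ℝ) (E : V → V → Prop)
    (hsymm : ∀ u v, E u v → E v u) (C : V → α) (u : V) :
    ∑ v ∈ phi2m E C u, ((NH β E u ∩ NH β E v).filter (fun w => C u = C w)).card
      ≤ ∑ w ∈ NH β E u, (phi1p E C w).card := by
  have key : ∀ v : V, (NH β E u ∩ NH β E v).filter (fun w => C u = C w)
      = ((NH β E u).filter (fun w => C u = C w)).filter (fun w => w ∈ NH β E v) := by
    intro v; ext w
    simp only [Finset.mem_filter, Finset.mem_inter]
    tauto
  calc ∑ v ∈ phi2m E C u, ((NH β E u ∩ NH β E v).filter (fun w => C u = C w)).card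
      = ∑ v ∈ phi2m E C u, ∑ w ∈ (NH β E u).filter (fun w => C u = C w),
          if w ∈ NH β E v then 1 else 0 := by
        refine Finset.sum_congr rfl fun v _ => ?_
        rw [key v, Finset.card_filter]
    _ = ∑ w ∈ (NH β E u).filter (fun w => C u = C w), ∑ v ∈ phi2m E C u,
          if w ∈ NH β E v then 1 else 0 := Finset.sum_comm
    _ ≤ ∑ w ∈ (NH β E u).filter (fun w => C u = C w), (phi1p E C w).card := by
        refine Finset.sum_le_sum fun w hw => ?_
        rw [← Finset.card_filter]
        refine Finset.card_le_card fun v hv => ?_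
        obtain ⟨hv2m, hwv⟩ := Finset.mem_filter.1 hv
        obtain ⟨-, -, hCuv⟩ : v ≠ u ∧ ¬ E u v ∧ C u ≠ C v := by
          simpa [phi2m] using hv2m
        have hCw : C u = C w := (Finset.mem_filter.1 hw).2
        refine Finset.mem_filter.2 ⟨Finset.mem_univ _, ?_, ?_⟩
        · exact hsymm _ _ (mem_NH.1 hwv).1
        · rw [← hCw]; exact hCuv
    _ ≤ ∑ w ∈ NH β E u, (phi1p E C w).card :=
        Finset.sum_le_sum_of_subset (Finset.filter_subset _ _)

/-- `f^-_2 ≤ (2/(1−β))·cost^k_𝒞`. -/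
theorem f2m_le_costTopK [Fintype V] (E : V → V → Prop)
    (hsymm : ∀ u v, E u v → E v u) (hrefl : ∀ u, E u u)
    (β : ℝ) (hβ0 : 0 < β) (hβ1 : β < 1)
    {α : Type*} (C : V → α)
    (k : ℕ) (hk1 : 1 ≤ k) (hk2 : k ≤ Fintype.card V)
    (U : Finset V) (hU : U.card = k) :
    ∑ u ∈ U, ∑ v ∈ phi2m E C u, (1 - xval β E u v)
      ≤ (2 / (1 - β)) * (costTopK E C k : ℝ) := by
  classical
  have hβ' : (0:ℝ) < 1 - β := by linarith
  have hDpos : ∀ u : V, (0:ℝ) < (deg E u : ℝ) := fun u => by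
    exact_mod_cast deg_pos hrefl u
  -- abbreviations
  set A : V → V → Finset V :=
    fun u v => (NH β E u ∩ NH β E v).filter (fun w => ¬ C u = C w) with hA
  set B : V → V → Finset V :=
    fun u v => (NH β E u ∩ NH β E v).filter (fun w => C u = C w) with hB
  -- Step 1+2 : per-vertex bound
  have step2 : ∀ u : V, ∑ v ∈ phi2m E C u, (1 - xval β E u v)
      ≤ (∑ v ∈ phi2m E C u, ((A u v).card : ℝ)) / (deg E u : ℝ)
        + (∑ v ∈ phi2m E C u, ((B u v).card : ℝ)) / (deg E u : ℝ) := by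
    intro u
    rw [← add_div, ← Finset.sum_add_distrib, Finset.sum_div]
    refine Finset.sum_le_sum fun v hv => ?_
    obtain ⟨hne, -, -⟩ : v ≠ u ∧ ¬ E u v ∧ C u ≠ C v := by simpa [phi2m] using hv
    have hx : 1 - xval β E u v
        = ((NH β E u ∩ NH β E v).card : ℝ) / (Mdeg E u v : ℝ) := by
      rw [xval, if_neg (fun h => hne h.symm)]; ring
    have hcards : ((A u v).card : ℝ) + ((B u v).card : ℝ)
        = ((NH β E u ∩ NH β E v).card : ℝ) := by
      rw [← Nat.cast_add]
      norm_cast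
      rw [add_comm]
      exact Finset.card_filter_add_card_filter_not _
    rw [hx, hcards]
    apply div_le_div_of_nonneg_left (Nat.cast_nonneg _) (hDpos u)
    exact_mod_cast le_max_left (deg E u) (deg E v)
  -- Part A bound
  have partA : ∀ u : V, (∑ v ∈ phi2m E C u, ((A u v).card : ℝ)) / (deg E u : ℝ)
      ≤ (costC E C u : ℝ) / (1 - β) := by
    intro u
    rw [div_le_iff₀ (hDpos u)]
    calc ∑ v ∈ phi2m E C u, ((A u v).card : ℝ)
        ≤ ∑ w ∈ (NH β E u).filter (fun w => ¬ C u = C w), (deg E w : ℝ) := by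
          rw [← Nat.cast_sum, ← Nat.cast_sum]
          exact_mod_cast sumA β E hsymm C u
      _ ≤ ∑ w ∈ (NH β E u).filter (fun w => ¬ C u = C w), (deg E u : ℝ) / (1 - β) := by
          refine Finset.sum_le_sum fun w hw => ?_
          have := deg_le_of_mem_NH hβ0 (Finset.mem_filter.1 hw).1
          rw [le_div_iff₀ hβ']
          nlinarith
      _ = (((NH β E u).filter (fun w => ¬ C u = C w)).card : ℝ) * ((deg E u : ℝ) / (1 - β)) := by
          rw [Finset.sum_const, nsmul_eq_mul]
      _ ≤ (costC E C u : ℝ) * ((deg E u : ℝ) / (1 - β)) := by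
          have hsub : (NH β E u).filter (fun w => ¬ C u = C w)
              ⊆ Finset.univ.filter
                (fun v => (E u v ∧ C u ≠ C v) ∨ (¬ E u v ∧ v ≠ u ∧ C u = C v)) := by
            intro w hw
            obtain ⟨hw1, hw2⟩ := Finset.mem_filter.1 hw
            exact Finset.mem_filter.2 ⟨Finset.mem_univ _,
              Or.inl ⟨(mem_NH.1 hw1).1, hw2⟩⟩
          have := Finset.card_le_card hsub
          have h2 : (0:ℝ) ≤ (deg E u : ℝ) / (1 - β) :=
            div_nonneg (Nat.cast_nonneg _) (le_of_lt hβ')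
          have h3 : (((NH β E u).filter (fun w => ¬ C u = C w)).card : ℝ)
              ≤ (costC E C u : ℝ) := by exact_mod_cast this
          nlinarith
      _ = (costC E C u : ℝ) / (1 - β) * (deg E u : ℝ) := by ring
  -- Part B preliminaries
  set pc : V → ℝ := fun w => ((phi1p E C w).card : ℝ) with hpc
  set c : V → ℝ := fun w => ∑ u ∈ U, if w ∈ NH β E u then 1 / (deg E u : ℝ) else 0 with hc
  have hc0 : ∀ w, 0 ≤ c w := by
    intro w
    refine Finset.sum_nonneg fun u _ => ?_
    split
    · positivity
    · exact le_rfl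
  have hc1 : ∀ w, (1 - β) * c w ≤ 1 := by
    intro w
    have hX : (0:ℝ) < (1 - β) * (deg E w : ℝ) := mul_pos hβ' (hDpos w)
    have hcw : c w = ∑ u ∈ U.filter (fun u => w ∈ NH β E u), 1 / (deg E u : ℝ) :=
      (Finset.sum_filter _ _).symm
    have hterm : ∀ u ∈ U.filter (fun u => w ∈ NH β E u),
        1 / (deg E u : ℝ) ≤ 1 / ((1 - β) * (deg E w : ℝ)) := by
      intro u hu
      exact one_div_le_one_div_of_le hX (deg_le_of_mem_NH hβ0 (Finset.mem_filter.1 hu).2)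
    have hcard : ((U.filter (fun u => w ∈ NH β E u)).card : ℝ) ≤ (deg E w : ℝ) := by
      exact_mod_cast Finset.card_le_card fun u hu =>
        mem_Nbr.2 (hsymm _ _ (mem_NH.1 (Finset.mem_filter.1 hu).2).1)
    have h5 : c w ≤ ((U.filter (fun u => w ∈ NH β E u)).card : ℝ)
        * (1 / ((1 - β) * (deg E w : ℝ))) := by
      rw [hcw]
      calc ∑ u ∈ U.filter (fun u => w ∈ NH β E u), 1 / (deg E u : ℝ)
          ≤ ∑ _u ∈ U.filter (fun u => w ∈ NH β E u), 1 / ((1 - β) * (deg E w : ℝ)) :=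
            Finset.sum_le_sum hterm
        _ = _ := by rw [Finset.sum_const, nsmul_eq_mul]
    have h6 : (0:ℝ) ≤ 1 / ((1 - β) * (deg E w : ℝ)) := by positivity
    have h7 : ((1 - β) * (deg E w : ℝ)) * (1 / ((1 - β) * (deg E w : ℝ))) = 1 :=
      mul_one_div_cancel (ne_of_gt hX)
    nlinarith [hDpos w]
  have hck : ∑ w, c w ≤ (k : ℝ) := by
    have hswap : ∑ w, c w
        = ∑ u ∈ U, ∑ w : V, (if w ∈ NH β E u then 1 / (deg E u : ℝ) else 0) :=
      Finset.sum_comm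
    rw [hswap]
    have hcub : ∀ u ∈ U, ∑ w : V, (if w ∈ NH β E u then 1 / (deg E u : ℝ) else 0) ≤ 1 := by
      intro u _
      rw [Finset.sum_ite_mem, Finset.univ_inter, Finset.sum_const, nsmul_eq_mul]
      have hNH : ((NH β E u).card : ℝ) ≤ (deg E u : ℝ) := by
        exact_mod_cast Finset.card_le_card fun w hw => mem_Nbr.2 (mem_NH.1 hw).1
      rw [mul_one_div, div_le_one (hDpos u)]
      exact hNH
    calc ∑ u ∈ U, ∑ w : V, (if w ∈ NH β E u then 1 / (deg E u : ℝ) else 0)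
        ≤ ∑ _u ∈ U, (1:ℝ) := Finset.sum_le_sum hcub
      _ = (k : ℝ) := by simp [hU]
  -- Part B bound
  have partB : ∑ u ∈ U, (∑ v ∈ phi2m E C u, ((B u v).card : ℝ)) / (deg E u : ℝ)
      ≤ (costTopK E C k : ℝ) / (1 - β) := by
    have step1 : ∀ u ∈ U, (∑ v ∈ phi2m E C u, ((B u v).card : ℝ)) / (deg E u : ℝ)
        ≤ ∑ w : V, (if w ∈ NH β E u then pc w / (deg E u : ℝ) else 0) := by
      intro u _
      have h1 : ∑ v ∈ phi2m E C u, ((B u v).card : ℝ) ≤ ∑ w ∈ NH β E u, pc w := by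
        rw [← Nat.cast_sum]
        have := sumB β E hsymm C u
        calc ((∑ v ∈ phi2m E C u, (B u v).card : ℕ) : ℝ)
            ≤ ((∑ w ∈ NH β E u, (phi1p E C w).card : ℕ) : ℝ) := by exact_mod_cast this
          _ = ∑ w ∈ NH β E u, pc w := by rw [Nat.cast_sum]
      calc (∑ v ∈ phi2m E C u, ((B u v).card : ℝ)) / (deg E u : ℝ)
          ≤ (∑ w ∈ NH β E u, pc w) / (deg E u : ℝ) := by gcongr
        _ = ∑ w : V, (if w ∈ NH β E u then pc w / (deg E u : ℝ) else 0) := by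
            rw [Finset.sum_div, Finset.sum_ite_mem, Finset.univ_inter]
    have step2' : ∑ u ∈ U, (∑ v ∈ phi2m E C u, ((B u v).card : ℝ)) / (deg E u : ℝ)
        ≤ ∑ w : V, pc w * c w := by
      calc ∑ u ∈ U, (∑ v ∈ phi2m E C u, ((B u v).card : ℝ)) / (deg E u : ℝ)
          ≤ ∑ u ∈ U, ∑ w : V, (if w ∈ NH β E u then pc w / (deg E u : ℝ) else 0) :=
            Finset.sum_le_sum step1
        _ = ∑ w : V, ∑ u ∈ U, (if w ∈ NH β E u then pc w / (deg E u : ℝ) else 0) :=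
            Finset.sum_comm
        _ = ∑ w : V, pc w * c w := by
            refine Finset.sum_congr rfl fun w _ => ?_
            rw [hc, Finset.mul_sum]
            refine Finset.sum_congr rfl fun u _ => ?_
            rw [mul_ite, mul_one_div, mul_zero]
    have hz0 : ∀ w, 0 ≤ (1 - β) * c w := fun w => mul_nonneg (le_of_lt hβ') (hc0 w)
    have hzk : ∑ w : V, (1 - β) * c w ≤ (k : ℝ) := by
      rw [← Finset.mul_sum]
      have hk1' : (1:ℝ) ≤ (k:ℝ) := by exact_mod_cast hk1
      nlinarith [hck, Finset.sum_nonneg fun w (_ : w ∈ (Finset.univ : Finset V)) => hc0 w]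
    have hpcle : ∀ w, pc w ≤ (costC E C w : ℝ) := by
      intro w
      have : phi1p E C w ⊆ Finset.univ.filter
          (fun v => (E w v ∧ C w ≠ C v) ∨ (¬ E w v ∧ v ≠ w ∧ C w = C v)) := by
        intro v hv
        obtain ⟨-, hv2⟩ := Finset.mem_filter.1 hv
        exact Finset.mem_filter.2 ⟨Finset.mem_univ _, Or.inl hv2⟩
      rw [hpc]
      show ((phi1p E C w).card : ℝ) ≤ _
      unfold costC
      exact_mod_cast Finset.card_le_card this
    have hfrac : ∑ w : V, ((1 - β) * c w) * (costC E C w : ℝ) ≤ (costTopK E C k : ℝ) :=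
      frac_topk E C k hk1 hk2 _ hz0 hc1 hzk
    have hfin : ∑ w : V, pc w * c w ≤ (costTopK E C k : ℝ) / (1 - β) := by
      rw [le_div_iff₀ hβ']
      calc (∑ w : V, pc w * c w) * (1 - β) = ∑ w : V, ((1 - β) * c w) * pc w := by
            rw [Finset.sum_mul]
            exact Finset.sum_congr rfl fun w _ => by ring
        _ ≤ ∑ w : V, ((1 - β) * c w) * (costC E C w : ℝ) :=
            Finset.sum_le_sum fun w _ => mul_le_mul_of_nonneg_left (hpcle w) (hz0 w)
        _ ≤ (costTopK E C k : ℝ) := hfrac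
    exact le_trans step2' hfin
  -- Final assembly
  have hUsum : (∑ u ∈ U, (costC E C u : ℝ)) ≤ (costTopK E C k : ℝ) := by
    rw [← Nat.cast_sum]
    exact_mod_cast sum_costC_le_topK E C hU
  calc ∑ u ∈ U, ∑ v ∈ phi2m E C u, (1 - xval β E u v)
      ≤ ∑ u ∈ U, ((∑ v ∈ phi2m E C u, ((A u v).card : ℝ)) / (deg E u : ℝ)
          + (∑ v ∈ phi2m E C u, ((B u v).card : ℝ)) / (deg E u : ℝ)) :=
        Finset.sum_le_sum fun u _ => step2 u
    _ = ∑ u ∈ U, (∑ v ∈ phi2m E C u, ((A u v).card : ℝ)) / (deg E u : ℝ)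
          + ∑ u ∈ U, (∑ v ∈ phi2m E C u, ((B u v).card : ℝ)) / (deg E u : ℝ) :=
        Finset.sum_add_distrib
    _ ≤ ∑ u ∈ U, (costC E C u : ℝ) / (1 - β) + (costTopK E C k : ℝ) / (1 - β) :=
        add_le_add (Finset.sum_le_sum fun u _ => partA u) partB
    _ ≤ (costTopK E C k : ℝ) / (1 - β) + (costTopK E C k : ℝ) / (1 - β) := by
        rw [← Finset.sum_div]
        exact add_le_add (by gcongr) le_rfl
    _ = (2 / (1 - β)) * (costTopK E C k : ℝ) := by ring
end
end

section
/- Let G=(V,E) be a correlation clustering instance with |V|=n and let ρ ≥ 1. If a clustering 𝒞_ALG satisfies cost^k_{𝒞_ALG} ≤ ρ·min_{𝒞} cost^k_{𝒞} simultaneously for every integer k∈[n] (i.e., it is a ρ-approximation for all top-k norm objectives), then for every monotone symmetric norm f:ℝ^n_{≥0}→ℝ_{≥0}, f(cost_{𝒞_ALG}) ≤ ρ·min_{𝒞} f(cost_{𝒞}), where the minima are over all clusterings 𝒞 of V and cost_𝒞 denotes the disagreement vector of 𝒞. -/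
/-!
A `ρ`-approximation for every top-`k` objective says that each sum of `k` entries of the cost
vector `x` of `𝒞_ALG` is bounded by some sum of `k` entries of `z = ρ · cost_𝒞`, i.e. `x` is
weakly submajorized by `z`. Monotone symmetric norms respect weak submajorization
(Hardy–Littlewood–Pólya): with `x` sorted decreasingly, move mass inside `z` from an entry where
`z` exceeds `x` to a later one where it falls short. Such a move is a convex combination of `z`
and a transposition of `z`, so it does not increase `f`; it keeps the prefix sums of `z` above
those of `x` and makes one more entry agree with `x`. When no entry falls short, `x ≤ z` and
monotonicity concludes.
-/

open Finset

attribute [local instance] Classical.propDecidable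

noncomputable section

variable {V : Type*}

/-- A monotone symmetric norm on the nonnegative orthant of `ι → ℝ`:
it is nonnegative, positively homogeneous, subadditive, monotone, and invariant
under coordinate permutations (all conditions imposed on nonnegative vectors). -/
structure IsMonoSymNorm {ι : Type*} (f : (ι → ℝ) → ℝ) : Prop where
  nonneg : ∀ x : ι → ℝ, (∀ i, 0 ≤ x i) → 0 ≤ f x
  homog : ∀ (a : ℝ), 0 ≤ a → ∀ x : ι → ℝ, (∀ i, 0 ≤ x i) →
    f (fun i => a * x i) = a * f x
  subadd : ∀ x y : ι → ℝ, (∀ i, 0 ≤ x i) → (∀ i, 0 ≤ y i) →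
    f (fun i => x i + y i) ≤ f x + f y
  mono : ∀ x y : ι → ℝ, (∀ i, 0 ≤ x i) → (∀ i, x i ≤ y i) → f x ≤ f y
  symm : ∀ (σ : Equiv.Perm ι) (x : ι → ℝ), (∀ i, 0 ≤ x i) → f (fun i => x (σ i)) = f x

theorem Antitone.sum_le_sum_Iic_of_card_eq {ι M : Type*} [LinearOrder ι] [LocallyFiniteOrderBot ι]
    [AddCommMonoid M] [PartialOrder M] [IsOrderedAddMonoid M] {w : ι → M} (hw : Antitone w)
    {S : Finset ι} {i : ι} (hS : #S = #(Iic i)) :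
    ∑ j ∈ S, w j ≤ ∑ j ∈ Iic i, w j :=
  calc ∑ j ∈ S, w j ≤ ∑ j ∈ S ∩ Iic i, w j + #(S \ Iic i) • w i := by
        rw [← sum_inter_add_sum_sdiff S (Iic i)]
        gcongr
        exact sum_le_card_nsmul _ _ _ fun j hj =>
          hw (not_le.1 (by simpa using (mem_sdiff.1 hj).2)).le
    _ = ∑ j ∈ Iic i ∩ S, w j + #(Iic i \ S) • w i := by rw [inter_comm, card_sdiff_comm hS]
    _ ≤ ∑ j ∈ Iic i, w j := by
        rw [← sum_inter_add_sum_sdiff (Iic i) S]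
        gcongr
        exact card_nsmul_le_sum _ _ _ fun j hj => hw (mem_Iic.1 (mem_sdiff.1 hj).1)

theorem exists_equiv_fin_antitone_comp {ι α : Type*} [Fintype ι] [LinearOrder α] (x : ι → α) :
    ∃ a : Fin (Fintype.card ι) ≃ ι, Antitone (x ∘ a) := by
  let e := (Fintype.equivFin ι).symm
  let g : Fin (Fintype.card ι) → αᵒᵈ := fun i => OrderDual.toDual (x (e i))
  exact ⟨(Tuple.sort g).trans e, fun _ _ hij => Tuple.monotone_sort g hij⟩

/-- For nonnegative vectors this is weak submajorization `x ≺_w z`, usually stated through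
prefix sums of the decreasing rearrangements. -/
def WeaklySubmajorizedBy {ι : Type*} (x z : ι → ℝ) : Prop :=
  ∀ T : Finset ι, ∃ S : Finset ι, #S = #T ∧ ∑ i ∈ T, x i ≤ ∑ i ∈ S, z i

section Transfer

variable {ι : Type*} {x z : ι → ℝ} {j k : ι}

def transfer [DecidableEq ι] (z : ι → ℝ) (j k : ι) (δ : ℝ) : ι → ℝ :=
  z - Pi.single j δ + Pi.single k δ

theorem card_ne_transfer_lt [Fintype ι] [DecidableEq ι] (hxj : x j < z j) (hxk : z k < x k) :
    #{i | x i ≠ transfer z j k (min (z j - x j) (x k - z k)) i} < #{i | x i ≠ z i} := by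
  have hjk : j ≠ k := by rintro rfl; linarith
  refine card_lt_card ((ssubset_iff_of_subset ?_).2 ?_)
  · intro i
    simp only [mem_filter, mem_univ, true_and]
    rcases eq_or_ne i j with rfl | hij
    · exact fun _ => hxj.ne
    rcases eq_or_ne i k with rfl | hik
    · exact fun _ => hxk.ne'
    simp [transfer, hij, hik]
  · rcases min_cases (z j - x j) (x k - z k) with ⟨hmin, -⟩ | ⟨hmin, -⟩
    · exact ⟨j, by simp [hxj.ne], by simp [transfer, hmin, hjk]⟩
    · exact ⟨k, by simp [hxk.ne'], by simp [transfer, hmin, hjk.symm]⟩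

theorem sum_Iic_le_sum_Iic_transfer [LinearOrder ι] [LocallyFiniteOrderBot ι] {δ : ℝ}
    (hjk : j < k) (hbelow : ∀ i < k, x i ≤ z i) (hδ : δ ≤ z j - x j)
    (hxz : ∀ i, ∑ l ∈ Iic i, x l ≤ ∑ l ∈ Iic i, z l) (i : ι) :
    ∑ l ∈ Iic i, x l ≤ ∑ l ∈ Iic i, transfer z j k δ l := by
  simp only [transfer, Pi.add_apply, Pi.sub_apply, sum_add_distrib, sum_sub_distrib,
    sum_pi_single', mem_Iic]
  have := hxz i
  split_ifs with hj hk hk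
  · linarith
  · have hgap : z j - x j ≤ ∑ l ∈ Iic i, (z l - x l) :=
      single_le_sum (fun l hl => sub_nonneg.2 (hbelow l ((mem_Iic.1 hl).trans_lt (not_le.1 hk))))
        (mem_Iic.2 hj)
    rw [sum_sub_distrib] at hgap
    linarith
  · exact absurd (hjk.le.trans hk) hj
  · linarith

end Transfer

namespace IsMonoSymNorm

variable {ι : Type*} {f : (ι → ℝ) → ℝ}

theorem comp_equiv {κ : Type*} (hf : IsMonoSymNorm f) (e : κ ≃ ι) :
    IsMonoSymNorm (fun w : κ → ℝ => f (w ∘ e.symm)) where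
  nonneg w hw := hf.nonneg _ fun i => hw _
  homog a ha w hw := hf.homog a ha _ fun i => hw _
  subadd w v hw hv := hf.subadd _ _ (fun i => hw _) (fun i => hv _)
  mono w v hw hwv := hf.mono _ _ (fun i => hw _) (fun i => hwv _)
  symm σ w hw := by
    simpa [Function.comp_def] using hf.symm ((e.symm.trans σ).trans e) (w ∘ e.symm) fun i => hw _

theorem apply_convex_comb_perm_le (hf : IsMonoSymNorm f) {z : ι → ℝ} (hz₀ : ∀ i, 0 ≤ z i)
    (σ : Equiv.Perm ι) {t : ℝ} (ht₀ : 0 ≤ t) (ht₁ : t ≤ 1) :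
    f (fun i => (1 - t) * z i + t * z (σ i)) ≤ f z :=
  calc f (fun i => (1 - t) * z i + t * z (σ i))
      ≤ f (fun i => (1 - t) * z i) + f (fun i => t * z (σ i)) :=
        hf.subadd _ _ (fun i => mul_nonneg (by linarith) (hz₀ i)) fun i => mul_nonneg ht₀ (hz₀ _)
    _ = (1 - t) * f z + t * f z := by
        rw [hf.homog _ (by linarith) z hz₀, hf.homog t ht₀ _ fun i => hz₀ _, hf.symm σ z hz₀]
    _ = f z := by ring

theorem apply_transfer_le [DecidableEq ι] (hf : IsMonoSymNorm f) {z : ι → ℝ}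
    (hz₀ : ∀ i, 0 ≤ z i) {j k : ι} {δ : ℝ} (hδ₀ : 0 ≤ δ) (hδ : δ ≤ z j - z k) :
    f (transfer z j k δ) ≤ f z := by
  rcases hδ₀.eq_or_lt with rfl | hδpos
  · simp [transfer]
  have hzjk : 0 < z j - z k := hδpos.trans_le hδ
  set t := δ / (z j - z k)
  have htδ : t * (z j - z k) = δ := div_mul_cancel₀ _ hzjk.ne'
  have hcomb : transfer z j k δ =
      fun i => (1 - t) * z i + t * z (Equiv.swap j k i) := by
    funext i
    simp only [transfer, Pi.add_apply, Pi.sub_apply, Pi.single_apply, Equiv.swap_apply_def]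
    split_ifs <;> subst_vars <;> linarith
  rw [hcomb]
  exact hf.apply_convex_comb_perm_le hz₀ _ (div_nonneg hδ₀ hzjk.le) ((div_le_one hzjk).2 hδ)

section Prefix

variable [Fintype ι] [LinearOrder ι] [LocallyFiniteOrderBot ι] {x z : ι → ℝ}

/-- At the first index `k` with `z k < x k`, prefix domination forces an earlier `j` with
`x j < z j`; the transfer from `j` to `k` then makes `z` agree with `x` at `j` or at `k`. -/
theorem exists_transfer_step (hf : IsMonoSymNorm f) (hx : Antitone x) (hx₀ : ∀ i, 0 ≤ x i)
    (hz₀ : ∀ i, 0 ≤ z i) (hxz : ∀ i, ∑ l ∈ Iic i, x l ≤ ∑ l ∈ Iic i, z l)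
    (hlt : ∃ i, z i < x i) :
    ∃ z' : ι → ℝ, (∀ i, 0 ≤ z' i) ∧ (∀ i, ∑ l ∈ Iic i, x l ≤ ∑ l ∈ Iic i, z' l) ∧
      #{i | x i ≠ z' i} < #{i | x i ≠ z i} ∧ f z' ≤ f z := by
  obtain ⟨k, hk, hkmin⟩ := ({i | z i < x i} : Finset ι).exists_min_image id
    (let ⟨i, hi⟩ := hlt; ⟨i, by simpa using hi⟩)
  have hxk : z k < x k := by simpa using hk
  have hbelow : ∀ i < k, x i ≤ z i := fun i hik =>
    not_lt.1 fun h => (hkmin i (by simpa using h)).not_gt hik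
  obtain ⟨j, hj, hxj⟩ : ∃ j ∈ Iio k, x j < z j := by
    refine exists_lt_of_sum_lt ?_
    have := hxz k
    rw [Iic_eq_cons_Iio, sum_cons, sum_cons] at this
    linarith
  have hjk : j < k := mem_Iio.1 hj
  set δ := min (z j - x j) (x k - z k)
  have hδ₀ : 0 ≤ δ := le_min (by linarith) (by linarith)
  refine ⟨transfer z j k δ, fun i => ?_,
    sum_Iic_le_sum_Iic_transfer hjk hbelow (min_le_left _ _) hxz, card_ne_transfer_lt hxj hxk,
    hf.apply_transfer_le hz₀ hδ₀ ?_⟩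
  · have := min_le_left (z j - x j) (x k - z k)
    simp only [transfer, Pi.add_apply, Pi.sub_apply, Pi.single_apply]
    split_ifs <;> subst_vars <;> linarith [hx₀ i, hz₀ i]
  · linarith [min_le_right (z j - x j) (x k - z k), hx hjk.le]

theorem apply_le_of_sum_Iic_le (hf : IsMonoSymNorm f) (hx : Antitone x) (hx₀ : ∀ i, 0 ≤ x i)
    (hz₀ : ∀ i, 0 ≤ z i) (hxz : ∀ i, ∑ l ∈ Iic i, x l ≤ ∑ l ∈ Iic i, z l) : f x ≤ f z := by
  induction hN : #{i | x i ≠ z i} using Nat.strong_induction_on generalizing z with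
  | _ N ih =>
  by_cases hlt : ∃ i, z i < x i
  · obtain ⟨z', hz'₀, hxz', hcard, hfz'⟩ := hf.exists_transfer_step hx hx₀ hz₀ hxz hlt
    exact (ih _ (hN ▸ hcard) hz'₀ hxz' rfl).trans hfz'
  · exact hf.mono x z hx₀ fun i => not_lt.1 fun h => hlt ⟨i, h⟩

end Prefix

theorem apply_le_of_weaklySubmajorizedBy [Fintype ι] (hf : IsMonoSymNorm f) {x z : ι → ℝ}
    (hx₀ : ∀ i, 0 ≤ x i) (hz₀ : ∀ i, 0 ≤ z i) (hxz : WeaklySubmajorizedBy x z) : f x ≤ f z := by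
  obtain ⟨a, ha⟩ := exists_equiv_fin_antitone_comp x
  obtain ⟨b, hb⟩ := exists_equiv_fin_antitone_comp z
  have hfx : f (x ∘ a ∘ a.symm) = f x := by simp [Function.comp_def]
  have hfz : f (z ∘ b ∘ a.symm) = f z := hf.symm (a.symm.trans b) z hz₀
  rw [← hfx, ← hfz]
  refine (hf.comp_equiv a).apply_le_of_sum_Iic_le ha (fun _ => hx₀ _) (fun _ => hz₀ _) fun i => ?_
  obtain ⟨S, hS, hTS⟩ := hxz ((Iic i).map a.toEmbedding)
  calc ∑ l ∈ Iic i, (x ∘ a) l = ∑ u ∈ (Iic i).map a.toEmbedding, x u := by simp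
    _ ≤ ∑ u ∈ S, z u := hTS
    _ = ∑ l ∈ S.map b.symm.toEmbedding, (z ∘ b) l := by simp
    _ ≤ ∑ l ∈ Iic i, (z ∘ b) l := hb.sum_le_sum_Iic_of_card_eq (by simpa using hS)

end IsMonoSymNorm

theorem sum_costC_le_costTopK [Fintype V] {α : Type*} (E : V → V → Prop) (C : V → α)
    (T : Finset V) : ∑ u ∈ T, costC E C u ≤ costTopK E C #T :=
  le_sup (f := fun T => ∑ u ∈ T, costC E C u) (mem_powersetCard.2 ⟨subset_univ T, rfl⟩)

theorem exists_card_eq_sum_costC_eq_costTopK [Fintype V] {α : Type*} (E : V → V → Prop)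
    (C : V → α) {k : ℕ} (hk : k ≤ Fintype.card V) :
    ∃ S : Finset V, #S = k ∧ ∑ u ∈ S, costC E C u = costTopK E C k := by
  obtain ⟨S, hS, hmax⟩ := exists_mem_eq_sup (powersetCard k univ)
    (powersetCard_nonempty.2 (by rwa [card_univ]))
    (fun T => ∑ u ∈ T, costC E C u)
  exact ⟨S, (mem_powersetCard.1 hS).2, hmax.symm⟩

theorem topK_approx_implies_all_norm_approx_general [Fintype V] (E : V → V → Prop)
    (ρ : ℝ) (hρ : 1 ≤ ρ) (CALG : V → ℕ)
    (happrox : ∀ k : ℕ, 1 ≤ k → k ≤ Fintype.card V → ∀ D : V → ℕ,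
      (costTopK E CALG k : ℝ) ≤ ρ * (costTopK E D k : ℝ)) :
    ∀ f : (V → ℝ) → ℝ, IsMonoSymNorm f → ∀ D : V → ℕ,
      f (fun u => (costC E CALG u : ℝ)) ≤ ρ * f (fun u => (costC E D u : ℝ)) := by
  intro f hf D
  have hρ₀ : 0 ≤ ρ := zero_le_one.trans hρ
  have hcost₀ (C : V → ℕ) (u : V) : (0 : ℝ) ≤ costC E C u := Nat.cast_nonneg _
  rw [← hf.homog ρ hρ₀ _ (hcost₀ D)]
  refine hf.apply_le_of_weaklySubmajorizedBy (hcost₀ CALG)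
    (fun u => mul_nonneg hρ₀ (hcost₀ D u)) fun T => ?_
  rcases (#T).eq_zero_or_pos with hT | hT
  · exact ⟨∅, by simp [hT], by simp [card_eq_zero.1 hT]⟩
  obtain ⟨S, hS, hSD⟩ := exists_card_eq_sum_costC_eq_costTopK E D (card_le_univ T)
  refine ⟨S, hS, ?_⟩
  calc ∑ u ∈ T, (costC E CALG u : ℝ) ≤ costTopK E CALG #T := by
        exact_mod_cast sum_costC_le_costTopK E CALG T
    _ ≤ ρ * costTopK E D #T := happrox _ hT (card_le_univ T) D
    _ = ∑ u ∈ S, ρ * (costC E D u : ℝ) := by rw [← hSD, Nat.cast_sum, mul_sum]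

/-- If a clustering `𝒞_ALG` is simultaneously a `ρ`-approximation
for every top-`k` norm objective (`k ∈ [n]`), then it is a `ρ`-approximation for
every monotone symmetric norm `f` of the disagreement vector. -/
theorem topK_approx_implies_all_norm_approx [Fintype V] (E : V → V → Prop)
    (hsymm : ∀ u v, E u v → E v u) (hrefl : ∀ u, E u u)
    (ρ : ℝ) (hρ : 1 ≤ ρ) (CALG : V → ℕ)
    (happrox : ∀ k : ℕ, 1 ≤ k → k ≤ Fintype.card V → ∀ D : V → ℕ,
      (costTopK E CALG k : ℝ) ≤ ρ * (costTopK E D k : ℝ)) :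
    ∀ f : (V → ℝ) → ℝ, IsMonoSymNorm f → ∀ D : V → ℕ,
      f (fun u => (costC E CALG u : ℝ)) ≤ ρ * f (fun u => (costC E D u : ℝ)) :=
  topK_approx_implies_all_norm_approx_general E ρ hρ CALG happrox

end
end

section
/- Let G=(V,E) be a correlation clustering instance, β,λ∈(0,1), 𝒞 any clustering of V, k∈[n], and U⊆V any subset with |U|=k. Let φ^+_4 = {uv∈E_H∖E_G̃ : C(u)=C(v)} and g^+_4 = Σ_{u∈U} |φ^+_4(u)|. Then there exists a vector c^+_4∈ℝ_{≥0}^{V} such that: (a) g^+_4 ≤ Σ_{r∈V} c^+_4(r)·cost_𝒞(r); (b) c^+_4(r) ≤ 1/λ + 1/β + 1/(λβ) for every r∈V; (c) Σ_{r∈V} c^+_4(r) ≤ (1/λ + 1/β + 1/(λβ))·k. -/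
open Finset

attribute [local instance] Classical.propDecidable

noncomputable section

variable {V : Type*}

/-- `d_H(u)`: the degree of `u` in the pruned graph `H`. -/
def dH [Fintype V] (β : ℝ) (E : V → V → Prop) (u : V) : ℕ := (NH β E u).card

/-- A vertex is heavy if it keeps at least a `(1−λ)` fraction of its neighbours in `H`
(i.e. it is not light: `d_H(v) ≥ (1−λ)·d(v)`). -/
def Heavy [Fintype V] (β lam : ℝ) (E : V → V → Prop) (v : V) : Prop :=
  (1 - lam) * (deg E v : ℝ) ≤ (dH β E v : ℝ)

/-- The edge set `E_G̃ = {uv ∈ E_H : u or v is heavy}`. -/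
def EGt [Fintype V] (β lam : ℝ) (E : V → V → Prop) (u v : V) : Prop :=
  EH β E u v ∧ (Heavy β lam E u ∨ Heavy β lam E v)

/-- The graph `G̃ = (V, E_G̃)`. -/
def Gtilde [Fintype V] (β lam : ℝ) (E : V → V → Prop) : SimpleGraph V :=
  SimpleGraph.fromRel (fun u v => EGt β lam E u v)

/-- The pre-clustering `F`: the partition of `V` into connected components of `G̃`,
given by the map sending each vertex to its connected component. -/
def preCluster [Fintype V] (β lam : ℝ) (E : V → V → Prop) :
    V → (Gtilde β lam E).ConnectedComponent :=
  fun v => (Gtilde β lam E).connectedComponentMk v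

/-- `φ^+_4(u)`: (other endpoints of) edges of `E_H ∖ E_G̃` incident to `u` that are
not cut in `𝒞`. -/
def phi4p [Fintype V] {α : Type*} (β lam : ℝ) (E : V → V → Prop) (C : V → α) (u : V) :
    Finset V :=
  Finset.univ.filter (fun v => EH β E u v ∧ ¬ EGt β lam E u v ∧ C u = C v)

namespace Stmt17

variable [Fintype V] {α : Type*}

/-- The cluster of `u` as a finset. -/
def Cset (C : V → α) (u : V) : Finset V := Finset.univ.filter (fun v => C u = C v)

/-- Same-cluster non-`H` neighbours of `u`. -/
def Sset (β : ℝ) (E : V → V → Prop) (C : V → α) (u : V) : Finset V :=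
  (Nbr E u ∩ Cset C u) \ NH β E u

/-- Other-cluster non-`H` neighbours of `u`. -/
def Tset (β : ℝ) (E : V → V → Prop) (C : V → α) (u : V) : Finset V :=
  (Nbr E u \ NH β E u) \ Cset C u

lemma NH_subset_Nbr (β : ℝ) (E : V → V → Prop) (u : V) : NH β E u ⊆ Nbr E u := by
  intro v hv
  simp only [NH, Nbr, mem_filter, mem_univ, true_and] at *
  exact hv.1

lemma Sset_subset_Nbr (β : ℝ) (E : V → V → Prop) (C : V → α) (u : V) :
    Sset β E C u ⊆ Nbr E u :=
  (sdiff_subset).trans inter_subset_left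

lemma deg_pos (E : V → V → Prop) (hrefl : ∀ u, E u u) (u : V) : 0 < deg E u := by
  refine Finset.card_pos.2 ⟨u, ?_⟩
  simp [Nbr, hrefl u]

lemma dH_le_deg (β : ℝ) (E : V → V → Prop) (u : V) : dH β E u ≤ deg E u :=
  Finset.card_le_card (NH_subset_Nbr β E u)

lemma cost_eq (E : V → V → Prop) (hrefl : ∀ u, E u u) (C : V → α) (u : V) :
    costC E C u = (symmDiff (Nbr E u) (Cset C u)).card := by
  unfold costC Cset Nbr
  congr 1
  ext v
  simp only [mem_filter, mem_univ, true_and, Finset.mem_symmDiff]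
  constructor
  · rintro (⟨h1, h2⟩ | ⟨h1, h2, h3⟩)
    · exact Or.inl ⟨h1, h2⟩
    · exact Or.inr ⟨h3, h1⟩
  · rintro (⟨h1, h2⟩ | ⟨h1, h2⟩)
    · exact Or.inl ⟨h1, h2⟩
    · refine Or.inr ⟨h2, ?_, h1⟩
      rintro rfl
      exact h2 (hrefl v)

lemma card_sd_tri (A B D : Finset V) :
    (symmDiff A B).card ≤ (symmDiff A D).card + (symmDiff D B).card := by
  calc (symmDiff A B).card ≤ ((symmDiff A D) ∪ (symmDiff D B)).card := by
        apply Finset.card_le_card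
        exact symmDiff_triangle A D B
  _ ≤ _ := Finset.card_union_le _ _

lemma pair_cost {β : ℝ} {E : V → V → Prop} (hrefl : ∀ u, E u u) {C : V → α} {u v : V}
    (hE : E u v) (hH : ¬ EH β E u v) (hC : C u = C v) :
    β * (Mdeg E u v : ℝ) < (costC E C u : ℝ) + (costC E C v : ℝ) := by
  have h1 : ¬ (((symmDiff (Nbr E u) (Nbr E v)).card : ℝ) ≤ β * (Mdeg E u v : ℝ)) :=
    fun h => hH ⟨hE, h⟩
  push_neg at h1
  refine h1.trans_le ?_
  have hCs : Cset C u = Cset C v := by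
    ext w
    simp only [Cset, mem_filter, mem_univ, true_and, hC]
  have h2 := card_sd_tri (Nbr E u) (Nbr E v) (Cset C u)
  have h3 : (symmDiff (Cset C u) (Nbr E v)).card = (symmDiff (Nbr E v) (Cset C v)).card := by
    rw [hCs, symmDiff_comm]
  rw [cost_eq E hrefl C u, cost_eq E hrefl C v]
  rw [h3] at h2
  exact_mod_cast h2

lemma EH_symm {β : ℝ} {E : V → V → Prop} (hsymm : ∀ u v, E u v → E v u) {u v : V}
    (h : EH β E u v) : EH β E v u := by
  obtain ⟨h1, h2⟩ := h
  refine ⟨hsymm _ _ h1, ?_⟩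
  rw [symmDiff_comm]
  have : Mdeg E v u = Mdeg E u v := max_comm _ _
  rw [this]
  exact h2

lemma mem_Sset_iff {β : ℝ} {E : V → V → Prop} {C : V → α} {u r : V} :
    r ∈ Sset β E C u ↔ E u r ∧ C u = C r ∧ ¬ EH β E u r := by
  simp only [Sset, mem_sdiff, mem_inter, Nbr, Cset, NH, mem_filter, mem_univ, true_and]
  tauto

lemma Sset_symm {β : ℝ} {E : V → V → Prop} (hsymm : ∀ u v, E u v → E v u) {C : V → α}
    {u r : V} (h : r ∈ Sset β E C u) : u ∈ Sset β E C r := by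
  rw [mem_Sset_iff] at h ⊢
  obtain ⟨h1, h2, h3⟩ := h
  exact ⟨hsymm _ _ h1, h2.symm, fun hE => h3 (EH_symm hsymm hE)⟩

lemma card_split (β : ℝ) (E : V → V → Prop) (C : V → α) (u : V) :
    (Sset β E C u).card + (Tset β E C u).card + dH β E u = deg E u := by
  have hsub : NH β E u ⊆ Nbr E u := NH_subset_Nbr β E u
  have hU : Sset β E C u ∪ Tset β E C u = Nbr E u \ NH β E u := by
    ext v
    simp only [Sset, Tset, mem_union, mem_sdiff, mem_inter]
    tauto
  have hD : Disjoint (Sset β E C u) (Tset β E C u) := by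
    rw [Finset.disjoint_left]
    intro v hv hv'
    rw [mem_Sset_iff] at hv
    simp only [Tset, mem_sdiff] at hv'
    exact hv'.2 (by simp only [Cset, mem_filter, mem_univ, true_and]; exact hv.2.1)
  have h1 : (Sset β E C u).card + (Tset β E C u).card = (Nbr E u \ NH β E u).card := by
    rw [← Finset.card_union_of_disjoint hD, hU]
  have h2 : (Nbr E u \ NH β E u).card = deg E u - dH β E u := Finset.card_sdiff_of_subset hsub
  have h3 : dH β E u ≤ deg E u := dH_le_deg β E u
  omega

lemma phi4p_subset_NH (β lam : ℝ) (E : V → V → Prop) (C : V → α) (u : V) :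
    phi4p β lam E C u ⊆ NH β E u := by
  intro v hv
  simp only [phi4p, NH, mem_filter, mem_univ, true_and] at *
  exact hv.1

lemma Tset_card_le_cost (β : ℝ) (E : V → V → Prop) (hrefl : ∀ u, E u u) (C : V → α) (u : V) :
    (Tset β E C u).card ≤ costC E C u := by
  rw [cost_eq E hrefl C u]
  apply Finset.card_le_card
  intro v hv
  simp only [Tset, mem_sdiff] at hv
  rw [Finset.mem_symmDiff]
  exact Or.inl ⟨hv.1.1, hv.2⟩

end Stmt17
namespace Stmt17

variable [Fintype V] {α : Type*}

/-- Case predicate: the cost of `r` is at least `λβ·d(r)`. -/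
def Ac (β lam : ℝ) (E : V → V → Prop) (C : V → α) (r : V) : Prop :=
  lam * β * (deg E r : ℝ) ≤ (costC E C r : ℝ)

/-- Self-charge coefficient. -/
def sc (β lam : ℝ) (E : V → V → Prop) (C : V → α) (U : Finset V) (r : V) : ℝ :=
  if r ∈ U ∧ ¬ Heavy β lam E r then
    (if Ac β lam E C r then
      ((deg E r : ℝ) - ((Sset β E C r).card : ℝ)) / (lam * β * (deg E r : ℝ))
     else (1 - lam) / lam)
  else 0

/-- Foreign-charge coefficient from `u` to `r`. -/
def fc (β lam : ℝ) (E : V → V → Prop) (C : V → α) (u r : V) : ℝ :=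
  if ¬ Heavy β lam E u ∧ ¬ Ac β lam E C u ∧ r ∈ Sset β E C u then
    1 / (lam * β * (Mdeg E u r : ℝ))
  else 0

end Stmt17
set_option maxHeartbeats 2000000 in
/-- There is a nonnegative coefficient vector `c^+_4` such that
(a) `g^+_4 ≤ Σ_r c^+_4(r)·cost_𝒞(r)`, (b) `c^+_4(r) ≤ 1/λ + 1/β + 1/(λβ)` for every
`r`, and (c) `Σ_r c^+_4(r) ≤ (1/λ + 1/β + 1/(λβ))·k`. -/
theorem exists_coeff_g4p [Fintype V] (E : V → V → Prop)
    (hsymm : ∀ u v, E u v → E v u) (hrefl : ∀ u, E u u)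
    (β lam : ℝ) (hβ0 : 0 < β) (hβ1 : β < 1) (hlam0 : 0 < lam) (hlam1 : lam < 1)
    {α : Type*} (C : V → α)
    (k : ℕ) (hk1 : 1 ≤ k) (hk2 : k ≤ Fintype.card V)
    (U : Finset V) (hU : U.card = k) :
    ∃ c : V → ℝ, (∀ r, 0 ≤ c r) ∧
      ((∑ u ∈ U, ((phi4p β lam E C u).card : ℝ))
        ≤ ∑ r : V, c r * (costC E C r : ℝ)) ∧
      (∀ r : V, c r ≤ 1 / lam + 1 / β + 1 / (lam * β)) ∧
      (∑ r : V, c r ≤ (1 / lam + 1 / β + 1 / (lam * β)) * (k : ℝ)) := by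
  classical
  have hlb : (0:ℝ) < lam * β := mul_pos hlam0 hβ0
  have hdeg : ∀ u : V, (0:ℝ) < (deg E u : ℝ) := fun u => by
    exact_mod_cast Stmt17.deg_pos E hrefl u
  have hMdeg : ∀ u r : V, (0:ℝ) < (Mdeg E u r : ℝ) := fun u r =>
    lt_of_lt_of_le (hdeg u) (by exact_mod_cast Nat.le_max_left (deg E u) (deg E r))
  have hMu : ∀ u r : V, (deg E u : ℝ) ≤ (Mdeg E u r : ℝ) := fun u r => by
    exact_mod_cast Nat.le_max_left (deg E u) (deg E r)
  have hMr : ∀ u r : V, (deg E r : ℝ) ≤ (Mdeg E u r : ℝ) := fun u r => by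
    exact_mod_cast Nat.le_max_right (deg E u) (deg E r)
  have hs_le_d : ∀ r : V, ((Stmt17.Sset β E C r).card : ℝ) ≤ (deg E r : ℝ) := fun r => by
    exact_mod_cast Finset.card_le_card (Stmt17.Sset_subset_Nbr β E C r)
  have hcost0 : ∀ r : V, (0:ℝ) ≤ (costC E C r : ℝ) := fun r => Nat.cast_nonneg _
  have hil : (0:ℝ) < 1/lam := one_div_pos.2 hlam0
  have hib : (0:ℝ) < 1/β := one_div_pos.2 hβ0
  have hilb : (0:ℝ) < 1/(lam*β) := one_div_pos.2 hlb
  have hKnn : (0:ℝ) ≤ (1 - lam)/lam := div_nonneg (by linarith) hlam0.le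
  have hK1 : (1 - lam)/lam ≤ 1/lam := (div_le_div_iff_of_pos_right hlam0).2 (by linarith)
  have hscnn : ∀ r, 0 ≤ Stmt17.sc β lam E C U r := by
    intro r
    unfold Stmt17.sc
    split_ifs with h1 h2
    · exact div_nonneg (by linarith [hs_le_d r]) (mul_pos hlb (hdeg r)).le
    · exact hKnn
    · exact le_refl 0
  have hfcnn : ∀ u r, 0 ≤ Stmt17.fc β lam E C u r := by
    intro u r
    unfold Stmt17.fc
    split_ifs with h1
    · exact (div_pos one_pos (mul_pos hlb (hMdeg u r))).le
    · exact le_refl 0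
  -- per-receiver bound on foreign charges
  have hforeign : ∀ r : V, (∑ u ∈ U, Stmt17.fc β lam E C u r)
      ≤ ((Stmt17.Sset β E C r).card : ℝ) / (lam * β * (deg E r : ℝ)) := by
    intro r
    have hterm : ∀ u ∈ U, Stmt17.fc β lam E C u r
        ≤ (if u ∈ Stmt17.Sset β E C r then 1/(lam * β * (deg E r : ℝ)) else 0) := by
      intro u _
      unfold Stmt17.fc
      by_cases h1 : ¬ Heavy β lam E u ∧ ¬ Stmt17.Ac β lam E C u ∧ r ∈ Stmt17.Sset β E C u
      · rw [if_pos h1, if_pos (Stmt17.Sset_symm hsymm h1.2.2)]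
        exact one_div_le_one_div_of_le (mul_pos hlb (hdeg r))
          (mul_le_mul_of_nonneg_left (hMr u r) hlb.le)
      · rw [if_neg h1]
        split_ifs with h2
        · exact (div_pos one_pos (mul_pos hlb (hdeg r))).le
        · exact le_refl 0
    calc ∑ u ∈ U, Stmt17.fc β lam E C u r
        ≤ ∑ u ∈ U, (if u ∈ Stmt17.Sset β E C r then 1/(lam * β * (deg E r : ℝ)) else 0) :=
          Finset.sum_le_sum hterm
      _ ≤ ∑ u : V, (if u ∈ Stmt17.Sset β E C r then 1/(lam * β * (deg E r : ℝ)) else 0) := by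
          refine Finset.sum_le_sum_of_subset_of_nonneg (Finset.subset_univ U) ?_
          intro i _ _
          split_ifs with h2
          · exact (div_pos one_pos (mul_pos hlb (hdeg r))).le
          · exact le_refl 0
      _ = ((Stmt17.Sset β E C r).card : ℝ) / (lam * β * (deg E r : ℝ)) := by
          rw [Finset.sum_ite_mem, Finset.univ_inter, Finset.sum_const, nsmul_eq_mul,
            mul_one_div]
  have hfb : ∀ r : V, ((Stmt17.Sset β E C r).card : ℝ)/(lam * β * (deg E r : ℝ)) ≤ 1/(lam*β) := by
    intro r
    rw [div_le_div_iff₀ (mul_pos hlb (hdeg r)) hlb]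
    nlinarith [mul_le_mul_of_nonneg_left (hs_le_d r) hlb.le]
  -- per-sender bound on foreign charges
  have hsend : ∀ u : V, (∑ r : V, Stmt17.fc β lam E C u r)
      ≤ ((Stmt17.Sset β E C u).card : ℝ) / (lam * β * (deg E u : ℝ)) := by
    intro u
    have hterm : ∀ r : V, Stmt17.fc β lam E C u r
        ≤ (if r ∈ Stmt17.Sset β E C u then 1/(lam * β * (deg E u : ℝ)) else 0) := by
      intro r
      unfold Stmt17.fc
      by_cases h1 : ¬ Heavy β lam E u ∧ ¬ Stmt17.Ac β lam E C u ∧ r ∈ Stmt17.Sset β E C u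
      · rw [if_pos h1, if_pos h1.2.2]
        exact one_div_le_one_div_of_le (mul_pos hlb (hdeg u))
          (mul_le_mul_of_nonneg_left (hMu u r) hlb.le)
      · rw [if_neg h1]
        split_ifs with h2
        · exact (div_pos one_pos (mul_pos hlb (hdeg u))).le
        · exact le_refl 0
    calc ∑ r : V, Stmt17.fc β lam E C u r
        ≤ ∑ r : V, (if r ∈ Stmt17.Sset β E C u then 1/(lam * β * (deg E u : ℝ)) else 0) :=
          Finset.sum_le_sum (fun r _ => hterm r)
      _ = ((Stmt17.Sset β E C u).card : ℝ) / (lam * β * (deg E u : ℝ)) := by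
          rw [Finset.sum_ite_mem, Finset.univ_inter, Finset.sum_const, nsmul_eq_mul,
            mul_one_div]
  refine ⟨fun r => Stmt17.sc β lam E C U r + ∑ u ∈ U, Stmt17.fc β lam E C u r,
    fun r => add_nonneg (hscnn r) (Finset.sum_nonneg fun u _ => hfcnn u r), ?_, ?_, ?_⟩
  · -- (a) the payment inequality
    have hre : ∑ r : V, (Stmt17.sc β lam E C U r + ∑ u ∈ U, Stmt17.fc β lam E C u r)
          * (costC E C r : ℝ)
        = ∑ u ∈ U, (Stmt17.sc β lam E C U u * (costC E C u : ℝ)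
            + ∑ r : V, Stmt17.fc β lam E C u r * (costC E C r : ℝ)) := by
      have e1 : ∀ r : V, (Stmt17.sc β lam E C U r + ∑ u ∈ U, Stmt17.fc β lam E C u r)
            * (costC E C r : ℝ)
          = Stmt17.sc β lam E C U r * (costC E C r : ℝ)
            + ∑ u ∈ U, Stmt17.fc β lam E C u r * (costC E C r : ℝ) := by
        intro r
        rw [add_mul, Finset.sum_mul]
      rw [Finset.sum_congr rfl fun r _ => e1 r, Finset.sum_add_distrib,
        Finset.sum_add_distrib, Finset.sum_comm]
      congr 1
      refine (Finset.sum_subset (Finset.subset_univ U) ?_).symm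
      intro x _ hx
      have : Stmt17.sc β lam E C U x = 0 := by
        unfold Stmt17.sc
        rw [if_neg (fun h => hx h.1)]
      rw [this, zero_mul]
    rw [hre]
    refine Finset.sum_le_sum ?_
    intro u huU
    by_cases hHv : Heavy β lam E u
    · have hempty : phi4p β lam E C u = ∅ := by
        rw [Finset.eq_empty_iff_forall_notMem]
        intro v hv
        simp only [phi4p, Finset.mem_filter, Finset.mem_univ, true_and] at hv
        exact hv.2.1 ⟨hv.1, Or.inl hHv⟩
      rw [hempty]
      simp only [Finset.card_empty, Nat.cast_zero]
      exact add_nonneg (mul_nonneg (hscnn u) (hcost0 u))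
        (Finset.sum_nonneg fun r _ => mul_nonneg (hfcnn u r) (hcost0 r))
    · have hm : ((phi4p β lam E C u).card : ℝ) ≤ (dH β E u : ℝ) := by
        exact_mod_cast Finset.card_le_card (Stmt17.phi4p_subset_NH β lam E C u)
      have hsplit : ((Stmt17.Sset β E C u).card : ℝ) + ((Stmt17.Tset β E C u).card : ℝ)
          + (dH β E u : ℝ) = (deg E u : ℝ) := by
        exact_mod_cast Stmt17.card_split β E C u
      have htnn : (0:ℝ) ≤ ((Stmt17.Tset β E C u).card : ℝ) := Nat.cast_nonneg _
      have hsnn : (0:ℝ) ≤ ((Stmt17.Sset β E C u).card : ℝ) := Nat.cast_nonneg _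
      by_cases hAc : Stmt17.Ac β lam E C u
      · have h1 : Stmt17.sc β lam E C U u
            = ((deg E u : ℝ) - ((Stmt17.Sset β E C u).card : ℝ)) / (lam * β * (deg E u : ℝ)) := by
          unfold Stmt17.sc
          rw [if_pos ⟨huU, hHv⟩, if_pos hAc]
        have hAc' : lam * β * (deg E u : ℝ) ≤ (costC E C u : ℝ) := hAc
        have hd := mul_pos hlb (hdeg u)
        have h2 : (deg E u : ℝ) - ((Stmt17.Sset β E C u).card : ℝ)
            ≤ Stmt17.sc β lam E C U u * (costC E C u : ℝ) := by
          rw [h1]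
          calc (deg E u : ℝ) - ((Stmt17.Sset β E C u).card : ℝ)
              = ((deg E u : ℝ) - ((Stmt17.Sset β E C u).card : ℝ)) / (lam * β * (deg E u : ℝ))
                * (lam * β * (deg E u : ℝ)) := by
                rw [div_mul_cancel₀ _ hd.ne']
            _ ≤ ((deg E u : ℝ) - ((Stmt17.Sset β E C u).card : ℝ)) / (lam * β * (deg E u : ℝ))
                * (costC E C u : ℝ) := by
                refine mul_le_mul_of_nonneg_left hAc' ?_
                exact div_nonneg (by linarith [hs_le_d u]) hd.le
        have h3 : (0:ℝ) ≤ ∑ r : V, Stmt17.fc β lam E C u r * (costC E C r : ℝ) :=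
          Finset.sum_nonneg fun r _ => mul_nonneg (hfcnn u r) (hcost0 r)
        linarith
      · -- main case: u light, small cost
        have hsc1 : Stmt17.sc β lam E C U u = (1-lam)/lam := by
          unfold Stmt17.sc
          rw [if_pos ⟨huU, hHv⟩, if_neg hAc]
        have hlight : (dH β E u : ℝ) < (1-lam) * (deg E u : ℝ) := by
          unfold Heavy at hHv
          exact not_le.1 hHv
        have hst : lam * (deg E u : ℝ)
            < ((Stmt17.Sset β E C u).card : ℝ) + ((Stmt17.Tset β E C u).card : ℝ) := by
          nlinarith [hsplit, hlight]
        have hcu : (costC E C u : ℝ) < lam * β * (deg E u : ℝ) := by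
          unfold Stmt17.Ac at hAc
          exact not_le.1 hAc
        have hrecv : ∑ r : V, Stmt17.fc β lam E C u r * (costC E C r : ℝ)
            = ∑ r ∈ Stmt17.Sset β E C u,
                1/(lam * β * (Mdeg E u r : ℝ)) * (costC E C r : ℝ) := by
          have he : ∀ r : V, Stmt17.fc β lam E C u r * (costC E C r : ℝ)
              = if r ∈ Stmt17.Sset β E C u then
                  1/(lam * β * (Mdeg E u r : ℝ)) * (costC E C r : ℝ) else 0 := by
            intro r
            unfold Stmt17.fc
            by_cases h2 : r ∈ Stmt17.Sset β E C u
            · rw [if_pos h2, if_pos ⟨hHv, hAc, h2⟩]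
            · rw [if_neg h2, if_neg (fun h => h2 h.2.2), zero_mul]
          rw [Finset.sum_congr rfl fun r _ => he r, Finset.sum_ite_mem, Finset.univ_inter]
        have hterm : ∀ r ∈ Stmt17.Sset β E C u,
            (1-lam)/lam ≤ 1/(lam * β * (Mdeg E u r : ℝ)) * (costC E C r : ℝ) := by
          intro r hr
          rw [Stmt17.mem_Sset_iff] at hr
          have hp := Stmt17.pair_cost hrefl hr.1 hr.2.2 hr.2.1
          have hM := hMdeg u r
          have hcr : (1-lam) * (β * (Mdeg E u r : ℝ)) < (costC E C r : ℝ) := by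
            nlinarith [mul_le_mul_of_nonneg_left (hMu u r) hlb.le]
          rw [one_div_mul_eq_div, div_le_div_iff₀ hlam0 (mul_pos hlb hM)]
          nlinarith [mul_lt_mul_of_pos_left hcr hlam0]
        have hrecvge : ((Stmt17.Sset β E C u).card : ℝ) * ((1-lam)/lam)
            ≤ ∑ r ∈ Stmt17.Sset β E C u,
                1/(lam * β * (Mdeg E u r : ℝ)) * (costC E C r : ℝ) := by
          have := Finset.card_nsmul_le_sum (Stmt17.Sset β E C u) _ _ hterm
          simpa [nsmul_eq_mul] using this
        have htc : ((Stmt17.Tset β E C u).card : ℝ) ≤ (costC E C u : ℝ) := by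
          exact_mod_cast Stmt17.Tset_card_le_cost β E hrefl C u
        rw [hsc1, hrecv]
        -- now conclude by linear arithmetic after clearing the division
        have e2 : lam * (dH β E u : ℝ) = lam * (deg E u : ℝ)
            - lam * ((Stmt17.Sset β E C u).card : ℝ)
            - lam * ((Stmt17.Tset β E C u).card : ℝ) := by
          rw [← hsplit]; ring
        have e3 : lam * (((Stmt17.Sset β E C u).card : ℝ) * ((1-lam)/lam))
            = (1-lam) * ((Stmt17.Sset β E C u).card : ℝ) := by
          field_simp
        have h4 := mul_le_mul_of_nonneg_left hrecvge hlam0.le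
        have h5 := mul_le_mul_of_nonneg_left htc (show (0:ℝ) ≤ 1 - lam by linarith)
        have h6 := mul_le_mul_of_nonneg_left hm hlam0.le
        have e4 : lam * ((1-lam)/lam * (costC E C u : ℝ)
              + ∑ r ∈ Stmt17.Sset β E C u,
                  1/(lam * β * (Mdeg E u r : ℝ)) * (costC E C r : ℝ))
            = (1-lam) * (costC E C u : ℝ)
              + lam * ∑ r ∈ Stmt17.Sset β E C u,
                  1/(lam * β * (Mdeg E u r : ℝ)) * (costC E C r : ℝ) := by
          field_simp
        rw [← mul_le_mul_iff_right₀ hlam0, e4]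
        linarith [h4, h5, h6, e2, e3, hst]
  · -- (b) the per-coordinate bound
    intro r
    show Stmt17.sc β lam E C U r + ∑ u ∈ U, Stmt17.fc β lam E C u r
        ≤ 1 / lam + 1 / β + 1 / (lam * β)
    have h3 := hforeign r
    have h2 := h3.trans (hfb r)
    unfold Stmt17.sc
    split_ifs with h1 hA
    · have he : ((deg E r : ℝ) - ((Stmt17.Sset β E C r).card : ℝ)) / (lam * β * (deg E r : ℝ))
          + ((Stmt17.Sset β E C r).card : ℝ) / (lam * β * (deg E r : ℝ)) = 1/(lam*β) := by
        rw [← add_div, sub_add_cancel, div_eq_div_iff (mul_pos hlb (hdeg r)).ne' hlb.ne']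
        ring
      linarith
    · linarith
    · linarith
  · -- (c) the total bound
    have hsum : ∑ r : V, (Stmt17.sc β lam E C U r + ∑ u ∈ U, Stmt17.fc β lam E C u r)
        = ∑ u ∈ U, (Stmt17.sc β lam E C U u + ∑ r : V, Stmt17.fc β lam E C u r) := by
      rw [Finset.sum_add_distrib, Finset.sum_add_distrib, Finset.sum_comm]
      congr 1
      refine (Finset.sum_subset (Finset.subset_univ U) ?_).symm
      intro x _ hx
      unfold Stmt17.sc
      rw [if_neg (fun h => hx h.1)]
    rw [hsum]
    have hper : ∀ u ∈ U, Stmt17.sc β lam E C U u + ∑ r : V, Stmt17.fc β lam E C u r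
        ≤ 1/lam + 1/β + 1/(lam*β) := by
      intro u huU
      by_cases hHv : Heavy β lam E u
      · have h1 : Stmt17.sc β lam E C U u = 0 := by
          unfold Stmt17.sc
          rw [if_neg (fun h => h.2 hHv)]
        have h2 : ∀ r : V, Stmt17.fc β lam E C u r = 0 := by
          intro r
          unfold Stmt17.fc
          rw [if_neg (fun h => h.1 hHv)]
        rw [h1, Finset.sum_congr rfl fun r _ => h2 r, Finset.sum_const, smul_zero]
        linarith
      by_cases hAc : Stmt17.Ac β lam E C u
      · have h2 : ∀ r : V, Stmt17.fc β lam E C u r = 0 := by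
          intro r
          unfold Stmt17.fc
          rw [if_neg (fun h => h.2.1 hAc)]
        have h1 : Stmt17.sc β lam E C U u
            = ((deg E u : ℝ) - ((Stmt17.Sset β E C u).card : ℝ)) / (lam * β * (deg E u : ℝ)) := by
          unfold Stmt17.sc
          rw [if_pos ⟨huU, hHv⟩, if_pos hAc]
        have h3 : ((deg E u : ℝ) - ((Stmt17.Sset β E C u).card : ℝ)) / (lam * β * (deg E u : ℝ))
            ≤ 1/(lam*β) := by
          rw [div_le_div_iff₀ (mul_pos hlb (hdeg u)) hlb]
          have hsnn' : (0:ℝ) ≤ ((Stmt17.Sset β E C u).card : ℝ) := Nat.cast_nonneg _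
          nlinarith [hsnn', hlb, hdeg u,
            mul_le_mul_of_nonneg_left
              (show (deg E u : ℝ) - ((Stmt17.Sset β E C u).card : ℝ) ≤ (deg E u : ℝ) by
                linarith) hlb.le]
        rw [h1, Finset.sum_congr rfl fun r _ => h2 r, Finset.sum_const, smul_zero]
        linarith
      · have h1 : Stmt17.sc β lam E C U u = (1-lam)/lam := by
          unfold Stmt17.sc
          rw [if_pos ⟨huU, hHv⟩, if_neg hAc]
        have h2 := (hsend u).trans (hfb u)
        rw [h1]
        linarith
    calc ∑ u ∈ U, (Stmt17.sc β lam E C U u + ∑ r : V, Stmt17.fc β lam E C u r)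
        ≤ ∑ _u ∈ U, (1/lam + 1/β + 1/(lam*β)) := Finset.sum_le_sum hper
      _ = (1/lam + 1/β + 1/(lam*β)) * (k:ℝ) := by
          rw [Finset.sum_const, hU, nsmul_eq_mul, mul_comm]

end
end
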